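/- Let x = (x₁,x₂) ∈ Z² with x₁, x₂ > 0. Every minimal contour γ ∈ Γ^{‖x‖}_{{0,x}} contains the four edges ⟨(-1,0),(0,0)⟩, ⟨(0,-1),(0,0)⟩, ⟨(x₁,x₂),(x₁,x₂+1)⟩ and ⟨(x₁,x₂),(x₁+1,x₂)⟩. -/

import Mathlib

open MeasureTheory Filter

/-- An edge of the square lattice `ℤ × ℤ`, encoded by its lower-left endpoint `base`
together with its direction: a horizontal edge joins `base` to `base + (1,0)`,
a vertical edge joins `base` to `base + (0,1)`. This encodes exactly the set
`𝔼` of nearest-neighbour edges of `ℤ²`. -/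
structure LatticeEdge where
  base : ℤ × ℤ
  horiz : Bool
deriving DecidableEq

namespace LatticeEdge

/-- First endpoint of an edge. -/
def fst (e : LatticeEdge) : ℤ × ℤ := e.base

/-- Second endpoint of an edge. -/
def snd (e : LatticeEdge) : ℤ × ℤ :=
  if e.horiz then (e.base.1 + 1, e.base.2) else (e.base.1, e.base.2 + 1)

/-- The two endpoints of an edge, as an unordered pair. -/
def ends (e : LatticeEdge) : Sym2 (ℤ × ℤ) := s(e.fst, e.snd)

end LatticeEdge

/-- The graph on `ℤ²` whose edges are the lattice edges belonging to `S`. -/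
def graphOf (S : Set LatticeEdge) : SimpleGraph (ℤ × ℤ) where
  Adj u v := u ≠ v ∧ ∃ e ∈ S, e.ends = s(u, v)
  symm := by
    constructor
    intro u v h
    obtain ⟨hne, e, he, hs⟩ := h
    exact ⟨hne.symm, e, he, hs.trans (Sym2.eq_swap)⟩
  loopless := by
    constructor
    intro u h
    exact h.1 rfl

/-- The graph `(ℤ², 𝔼 ∖ γ)` obtained by deleting the edges of `γ`. -/
def complGraph (γ : Finset LatticeEdge) : SimpleGraph (ℤ × ℤ) :=
  graphOf {e | e ∉ γ}

/-- A finite set `γ` of lattice edges is a *contour* if the graph `(ℤ², 𝔼 ∖ γ)` has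
exactly one finite connected component, and `γ` is minimal with this property:
for every `e ∈ γ`, the graph `(ℤ², 𝔼 ∖ (γ ∖ {e}))` has no finite connected component. -/
def IsContour (γ : Finset LatticeEdge) : Prop :=
  (∃! C : (complGraph γ).ConnectedComponent, C.supp.Finite) ∧
  ∀ e ∈ γ, ∀ C : (graphOf {f | f ∉ γ ∨ f = e}).ConnectedComponent, ¬ C.supp.Finite

/-- A contour `γ` *surrounds* a set `X ⊆ ℤ²` of vertices if `X` is contained in the
vertex set `I_γ` of the (unique) finite connected component of `(ℤ², 𝔼 ∖ γ)`. -/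
def Surrounds (γ : Finset LatticeEdge) (X : Set (ℤ × ℤ)) : Prop :=
  IsContour γ ∧ ∃ C : (complGraph γ).ConnectedComponent, C.supp.Finite ∧ X ⊆ C.supp

/-- `Γ^n_X` : the set of contours of cardinality `n` surrounding `X`. -/
def GammaN (X : Set (ℤ × ℤ)) (n : ℕ) : Set (Finset LatticeEdge) :=
  {γ | Surrounds γ X ∧ γ.card = n}

/-- `‖x‖ = 2(x₁ + x₂ + 2)`, the cardinality of a minimal contour surrounding `{0, x}`. -/
def normC (x : ℤ × ℤ) : ℕ := (2 * (x.1 + x.2 + 2)).toNat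

/-- `β_x` : the number of minimal contours surrounding `{0, x}`. -/
noncomputable def betaX (x : ℤ × ℤ) : ℕ := Nat.card ↥(GammaN {0, x} (normC x))

/-- Number of horizontal edges of `γ`, i.e. `|γ ∩ 𝔼ʰ|`. -/
def hCount (γ : Finset LatticeEdge) : ℕ := (γ.filter fun e => e.horiz = true).card

/-- Number of vertical edges of `γ`, i.e. `|γ ∩ 𝔼ᵛ|`. -/
def vCount (γ : Finset LatticeEdge) : ℕ := (γ.filter fun e => e.horiz = false).card

/-- The dual edge `e*` of a lattice edge `e`.  We identify the dual lattice
`ℤ² + (1/2, 1/2)` with `ℤ²` via `(a,b) ↦ (a + 1/2, b + 1/2)`; under this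
identification the dual edge crossing the horizontal edge `(a,b)–(a+1,b)` joins
`(a, b-1)` to `(a, b)` (a vertical dual edge), and the dual edge crossing the
vertical edge `(a,b)–(a,b+1)` joins `(a-1, b)` to `(a, b)` (a horizontal dual edge). -/
def dualEdge (e : LatticeEdge) : LatticeEdge :=
  if e.horiz then ⟨(e.base.1, e.base.2 - 1), false⟩ else ⟨(e.base.1 - 1, e.base.2), true⟩

/-- A finite set `S` of (dual) lattice edges is a *circuit* if it is the edge set of a
closed self-avoiding path: there are `n ≥ 3` distinct vertices `c 0, …, c (n-1)`,
cyclically consecutive ones being joined by an edge of `S`, and every edge of `S` arising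
this way. -/
def IsCircuit (S : Finset LatticeEdge) : Prop :=
  ∃ n : ℕ, 3 ≤ n ∧ ∃ c : ZMod n → ℤ × ℤ, Function.Injective c ∧
    (∀ i : ZMod n, ∃ e ∈ S, e.ends = s(c i, c (i + 1))) ∧
    (∀ e ∈ S, ∃ i : ZMod n, e.ends = s(c i, c (i + 1)))

/-- The dual edge `e_k*` joining `(k - 1/2, -1/2)` to `(k - 1/2, 1/2)`; in our
identification of the dual lattice with `ℤ²` this is the vertical dual edge with base
`(k-1, -1)`, i.e. the dual of the horizontal edge `(k-1, 0)–(k, 0)`. -/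
def ekStar (k : ℤ) : LatticeEdge := ⟨(k - 1, -1), false⟩

/-- The probability that the edge `e` is open: `p_h` for horizontal edges and `p_v`
for vertical ones. -/
noncomputable def edgeProb (ph pv : ℝ) (e : LatticeEdge) : ℝ := if e.horiz then ph else pv

/-- `P` is the Bernoulli product measure `P_{(p_h, p_v)}` on configurations
`ω ∈ {0,1}^𝔼` (encoded as `LatticeEdge → Bool`, `true` = open): it is a probability
measure and, for every finite set of edges, the states of those edges are independent
Bernoulli variables with the correct parameters.  These cylinder probabilities
characterize the product measure uniquely. -/
def IsBernoulliProduct (ph pv : ℝ) (P : Measure (LatticeEdge → Bool)) : Prop :=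
  IsProbabilityMeasure P ∧
    ∀ (F : Finset LatticeEdge) (σ : LatticeEdge → Bool),
      P {ω | ∀ e ∈ F, ω e = σ e} =
        ∏ e ∈ F, ENNReal.ofReal
          (if σ e then edgeProb ph pv e else 1 - edgeProb ph pv e)

/-- The graph of open edges of the configuration `ω`. -/
def openGraph (ω : LatticeEdge → Bool) : SimpleGraph (ℤ × ℤ) :=
  graphOf {e | ω e = true}

/-- `x` and `y` belong to the same finite open cluster of the configuration `ω`. -/
def SameFiniteCluster (ω : LatticeEdge → Bool) (x y : ℤ × ℤ) : Prop :=
  ∃ C : (openGraph ω).ConnectedComponent, x ∈ C.supp ∧ y ∈ C.supp ∧ C.supp.Finite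

/-- The truncated (finite) connectivity `τ^f_p(x,y)`: the probability that `x` and `y`
belong to the same finite open cluster. -/
noncomputable def tauF (P : Measure (LatticeEdge → Bool)) (x y : ℤ × ℤ) : ℝ :=
  (P {ω | SameFiniteCluster ω x y}).toReal

/-- The box `V_N = ([-N,N] × [-N,N]) ∩ ℤ²`. -/
def VN (N : ℕ) : Set (ℤ × ℤ) := {v | |v.1| ≤ (N : ℤ) ∧ |v.2| ≤ (N : ℤ)}

/-- The interior vertex boundary `∂_v^int V_N = {x ∈ V_N : d(x, ℤ² ∖ V_N) = 1}`. -/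
def intBdry (N : ℕ) : Set (ℤ × ℤ) :=
  {v | (|v.1| ≤ (N : ℤ) ∧ |v.2| ≤ (N : ℤ)) ∧ (|v.1| = (N : ℤ) ∨ |v.2| = (N : ℤ))}

/-- `e ∈ E_N`: both endpoints of `e` lie in `V_N`. -/
def edgeInBox (N : ℕ) (e : LatticeEdge) : Prop := e.fst ∈ VN N ∧ e.snd ∈ VN N

/-- The graph on `(V_N, open edges of E_N)` (vertices outside `V_N` are isolated). -/
def openGraphN (N : ℕ) (ω : LatticeEdge → Bool) : SimpleGraph (ℤ × ℤ) :=
  graphOf {e | edgeInBox N e ∧ ω e = true}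

/-- The finite-volume event defining `τ^{f,N}_p(x,y)`: there is an open cluster `A` of
`(V_N, open edges of E_N)` with `{x,y} ⊆ V_A` and `V_A ∩ ∂_v^int V_N = ∅`. -/
def FiniteVolEvent (N : ℕ) (x y : ℤ × ℤ) (ω : LatticeEdge → Bool) : Prop :=
  ∃ C : (openGraphN N ω).ConnectedComponent,
    x ∈ C.supp ∧ y ∈ C.supp ∧ C.supp ∩ intBdry N = ∅

/-- The finite-volume finite connectivity `τ^{f,N}_p(x,y)`. -/
noncomputable def tauFN (P : Measure (LatticeEdge → Bool)) (N : ℕ) (x y : ℤ × ℤ) : ℝ :=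
  (P {ω | FiniteVolEvent N x y ω}).toReal

/-- `λ = (1-p)/p`. -/
noncomputable def lam (p : ℝ) : ℝ := (1 - p) / p

/-- The threshold `η̃(p_h, x₁, x₂)` from the paper. -/
noncomputable def etaTilde (ph : ℝ) (x1 x2 : ℤ) : ℝ :=
  ((betaX (x1, x2) : ℝ) * ph ^ (4 * (x1 + x2 + 2)) /
      ((4 ^ 3 * lam ph) ^ (x1 + x2 + 3) / (1 - 4 ^ 3 * lam ph) +
        (betaX (x1, x2) : ℝ) * (1 + 12 * lam ph) ^ (2 * (x1 + x2 + 2)))) ^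
    (1 / (2 * ((x2 : ℝ) - (x1 : ℝ))))

/-! The finite component `C` of `(ℤ², 𝔼 ∖ γ)` containing `0` and `x` is connected, so it meets
every column `0 ≤ c ≤ x₁` and every row `0 ≤ r ≤ x₂`. Each column met by `C` contributes two
vertical edges of `γ` (above the top and below the bottom vertex of `C` in it), and each row two
horizontal ones, so `|γ| ≥ 2(x₁ + 1) + 2(x₂ + 1) = ‖x‖`. For a minimal contour this is an
equality, so `C` meets no other row or column: `C ⊆ [0, x₁] × [0, x₂]`. The four corner edges
join a vertex of `C` to a vertex outside this box, hence lie in `γ`. -/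

open Finset

theorem Set.Finite.exists_add_nsmul_mem_and_add_notMem {G : Type*} [AddGroup G]
    [IsAddTorsionFree G] {S : Set G} (hS : S.Finite) {δ : G} (hδ : δ ≠ 0) {p : G} (hp : p ∈ S) :
    ∃ n : ℕ, p + n • δ ∈ S ∧ p + n • δ + δ ∉ S := by
  by_contra! h
  have hrange : Set.range (fun n : ℕ => p + n • δ) ⊆ S := by
    rintro _ ⟨n, rfl⟩
    induction n with
    | zero => simpa using hp
    | succ n ih => simpa [succ_nsmul, add_assoc] using h n ih
  have hinj : (fun n : ℕ => p + n • δ).Injective := (add_right_injective p).comp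
    (injective_nsmul_iff_not_isOfFinAddOrder.mpr (not_isOfFinAddOrder_of_isAddTorsionFree hδ))
  exact Set.infinite_range_of_injective hinj (hS.subset hrange)

namespace SimpleGraph.ConnectedComponent

variable {V : Type*} {G : SimpleGraph V} {f : V → ℤ}

theorem exists_mem_supp_eq (hf : ∀ u v, G.Adj u v → f v ≤ f u + 1) (C : G.ConnectedComponent)
    {a b : V} (ha : a ∈ C.supp) (hb : b ∈ C.supp) {t : ℤ} (hat : f a ≤ t) (htb : t ≤ f b) :
    ∃ v ∈ C.supp, f v = t := by
  obtain ⟨w⟩ := C.reachable_of_mem_supp ha hb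
  induction w with
  | nil => exact ⟨_, ha, le_antisymm hat htb⟩
  | @cons u c b hadj w ih =>
    obtain hat | hat := hat.eq_or_lt
    · exact ⟨u, ha, hat⟩
    · exact ih (C.mem_supp_of_adj_mem_supp ha hadj) hb (by linarith [hf u c hadj]) htb

theorem uIcc_subset_image_supp (hf : ∀ u v, G.Adj u v → f v ≤ f u + 1)
    (C : G.ConnectedComponent) {a b : V} (ha : a ∈ C.supp) (hb : b ∈ C.supp) :
    Set.uIcc (f a) (f b) ⊆ f '' C.supp := by
  rcases le_total (f a) (f b) with hab | hba
  · rw [Set.uIcc_of_le hab]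
    exact fun t ht => C.exists_mem_supp_eq hf ha hb ht.1 ht.2
  · rw [Set.uIcc_of_ge hba]
    exact fun t ht => C.exists_mem_supp_eq hf hb ha ht.1 ht.2

end SimpleGraph.ConnectedComponent

namespace LatticeEdge

def step (horiz : Bool) : ℤ × ℤ := if horiz then (1, 0) else (0, 1)

theorem snd_eq_base_add_step (e : LatticeEdge) : e.snd = e.base + step e.horiz := by
  rcases e with ⟨⟨a, b⟩, _ | _⟩ <;> simp [snd, step]

theorem step_ne_zero (horiz : Bool) : step horiz ≠ 0 := by
  cases horiz <;> simp [step]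

theorem fst_ne_snd (e : LatticeEdge) : e.fst ≠ e.snd := by
  simpa [snd_eq_base_add_step, fst] using step_ne_zero e.horiz

def lineIndex (horiz : Bool) : ℤ × ℤ →+ ℤ :=
  if horiz then AddMonoidHom.snd ℤ ℤ else AddMonoidHom.fst ℤ ℤ

@[simp]
theorem lineIndex_step (horiz : Bool) : lineIndex horiz (step horiz) = 0 := by
  cases horiz <;> rfl

end LatticeEdge

open LatticeEdge

def edgeBoundary (S : Set (ℤ × ℤ)) : Set LatticeEdge := {e | Xor (e.fst ∈ S) (e.snd ∈ S)}

theorem complGraph.edgeBoundary_supp_subset {γ : Finset LatticeEdge}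
    (C : (complGraph γ).ConnectedComponent) : edgeBoundary C.supp ⊆ γ := by
  intro e he
  by_contra hγ
  have hadj : (complGraph γ).Adj e.fst e.snd := ⟨e.fst_ne_snd, e, hγ, rfl⟩
  exact (xor_iff_not_iff _ _).mp he (C.mem_supp_congr_adj hadj)

theorem two_le_card_filter_lineIndex {S : Set (ℤ × ℤ)} (hS : S.Finite) {γ : Finset LatticeEdge}
    (hγ : edgeBoundary S ⊆ γ) (horiz : Bool) {p : ℤ × ℤ} (hp : p ∈ S) :
    2 ≤ #{e ∈ γ | e.horiz = horiz ∧ lineIndex horiz e.base = lineIndex horiz p} := by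
  set δ := step horiz
  -- the last points of `S` on the line through `p`, going forward and going backward
  obtain ⟨m, hm, hm'⟩ := hS.exists_add_nsmul_mem_and_add_notMem (step_ne_zero horiz) hp
  obtain ⟨n, hn, hn'⟩ :=
    hS.exists_add_nsmul_mem_and_add_notMem (neg_ne_zero.mpr (step_ne_zero horiz)) hp
  have hq : (⟨p + m • δ, horiz⟩ : LatticeEdge) ∈ γ :=
    hγ (Or.inl ⟨hm, by rwa [snd_eq_base_add_step]⟩)
  have hr : (⟨p + n • -δ + -δ, horiz⟩ : LatticeEdge) ∈ γ :=
    hγ (Or.inr ⟨by rwa [snd_eq_base_add_step, neg_add_cancel_right], hn'⟩)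
  refine one_lt_card.mpr ⟨_, mem_filter.mpr ⟨hq, rfl, ?_⟩, _, mem_filter.mpr ⟨hr, rfl, ?_⟩, ?_⟩
  all_goals simp only [δ, map_add, map_neg, map_nsmul, lineIndex_step, neg_zero, smul_zero,
    add_zero, ne_eq, LatticeEdge.mk.injEq, not_and]
  exact fun hbase => absurd (hbase ▸ hm) hn'

theorem two_mul_card_image_lineIndex_le {S : Set (ℤ × ℤ)} (hS : S.Finite)
    {γ : Finset LatticeEdge} (hγ : edgeBoundary S ⊆ γ) (horiz : Bool) :
    2 * #(hS.toFinset.image (lineIndex horiz)) ≤ #{e ∈ γ | e.horiz = horiz} := by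
  set lines := hS.toFinset.image (lineIndex horiz)
  calc 2 * #lines = ∑ _ ∈ lines, 2 := by rw [sum_const, smul_eq_mul, mul_comm]
    _ ≤ ∑ ℓ ∈ lines, #{e ∈ {e ∈ γ | e.horiz = horiz} | lineIndex horiz e.base = ℓ} := by
      refine sum_le_sum fun ℓ hℓ => ?_
      obtain ⟨p, hp, rfl⟩ := mem_image.mp hℓ
      rw [filter_filter]
      exact two_le_card_filter_lineIndex hS hγ horiz (hS.mem_toFinset.mp hp)
    _ = #{e ∈ {e ∈ γ | e.horiz = horiz} | lineIndex horiz e.base ∈ lines} :=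
      sum_card_fiberwise_eq_card_filter _ _ _
    _ ≤ #{e ∈ γ | e.horiz = horiz} := card_filter_le _ _

theorem two_mul_card_image_fst_add_two_mul_card_image_snd_le {S : Set (ℤ × ℤ)} (hS : S.Finite)
    {γ : Finset LatticeEdge} (hγ : edgeBoundary S ⊆ γ) :
    2 * #(hS.toFinset.image Prod.fst) + 2 * #(hS.toFinset.image Prod.snd) ≤ #γ := by
  have hvert := two_mul_card_image_lineIndex_le hS hγ false
  have hhoriz := two_mul_card_image_lineIndex_le hS hγ true
  have hsplit := card_filter_add_card_filter_not (s := γ) (fun e => e.horiz = false)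
  simp only [Bool.not_eq_false] at hsplit
  exact hsplit ▸ add_le_add hvert hhoriz

theorem graphOf_adj_lineIndex_le {S : Set LatticeEdge} {u v : ℤ × ℤ} (h : (graphOf S).Adj u v)
    (horiz : Bool) : lineIndex horiz v ≤ lineIndex horiz u + 1 := by
  obtain ⟨-, e, -, he⟩ := h
  rw [ends, Sym2.eq_iff] at he
  rcases he with ⟨rfl, rfl⟩ | ⟨rfl, rfl⟩ <;>
  · rw [snd_eq_base_add_step, map_add]
    cases horiz <;> cases e.horiz <;> simp [lineIndex, step, fst] <;> omega

namespace complGraph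

variable {γ : Finset LatticeEdge} {C : (complGraph γ).ConnectedComponent} {a b : ℤ × ℤ}

theorem uIcc_subset_image_lineIndex (hC : C.supp.Finite) (ha : a ∈ C.supp) (hb : b ∈ C.supp)
    (horiz : Bool) :
    uIcc (lineIndex horiz a) (lineIndex horiz b) ⊆ hC.toFinset.image (lineIndex horiz) := by
  rw [← coe_subset, coe_uIcc, coe_image, hC.coe_toFinset]
  exact C.uIcc_subset_image_supp (fun u v h => graphOf_adj_lineIndex_le h horiz) ha hb

theorem uIcc_subset_image_fst (hC : C.supp.Finite) (ha : a ∈ C.supp) (hb : b ∈ C.supp) :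
    uIcc a.1 b.1 ⊆ hC.toFinset.image Prod.fst :=
  uIcc_subset_image_lineIndex hC ha hb false

theorem uIcc_subset_image_snd (hC : C.supp.Finite) (ha : a ∈ C.supp) (hb : b ∈ C.supp) :
    uIcc a.2 b.2 ⊆ hC.toFinset.image Prod.snd :=
  uIcc_subset_image_lineIndex hC ha hb true

theorem two_mul_card_uIcc_add_le_card (hC : C.supp.Finite) (ha : a ∈ C.supp)
    (hb : b ∈ C.supp) : 2 * #(uIcc a.1 b.1) + 2 * #(uIcc a.2 b.2) ≤ #γ := by
  have hcols := card_le_card (uIcc_subset_image_fst hC ha hb)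
  have hrows := card_le_card (uIcc_subset_image_snd hC ha hb)
  have hcount :=
    two_mul_card_image_fst_add_two_mul_card_image_snd_le hC (edgeBoundary_supp_subset C)
  omega

theorem mem_uIcc_of_card_le (hC : C.supp.Finite) (ha : a ∈ C.supp) (hb : b ∈ C.supp)
    (hγ : #γ ≤ 2 * #(uIcc a.1 b.1) + 2 * #(uIcc a.2 b.2)) {p : ℤ × ℤ} (hp : p ∈ C.supp) :
    p.1 ∈ uIcc a.1 b.1 ∧ p.2 ∈ uIcc a.2 b.2 := by
  have hcols := uIcc_subset_image_fst hC ha hb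
  have hrows := uIcc_subset_image_snd hC ha hb
  have hcount :=
    two_mul_card_image_fst_add_two_mul_card_image_snd_le hC (edgeBoundary_supp_subset C)
  have hcols_eq := eq_of_subset_of_card_le hcols (by have := card_le_card hrows; omega)
  have hrows_eq := eq_of_subset_of_card_le hrows (by have := card_le_card hcols; omega)
  have hp' := hC.mem_toFinset.mpr hp
  exact ⟨hcols_eq ▸ mem_image_of_mem _ hp', hrows_eq ▸ mem_image_of_mem _ hp'⟩

end complGraph

theorem minimal_contour_contains_corner_edges_general (x1 x2 : ℤ)
    (γ : Finset LatticeEdge) (hγ : γ ∈ GammaN {0, (x1, x2)} (normC (x1, x2))) :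
    (⟨(-1, 0), true⟩ : LatticeEdge) ∈ γ ∧ (⟨(0, -1), false⟩ : LatticeEdge) ∈ γ ∧
    (⟨(x1, x2), false⟩ : LatticeEdge) ∈ γ ∧ (⟨(x1, x2), true⟩ : LatticeEdge) ∈ γ := by
  obtain ⟨⟨-, C, hC, hX⟩, hcard⟩ := hγ
  have h0 : (0 : ℤ × ℤ) ∈ C.supp := hX (by simp)
  have hx : (x1, x2) ∈ C.supp := hX (by simp)
  have hlower := complGraph.two_mul_card_uIcc_add_le_card hC h0 hx
  simp only [normC, Int.card_uIcc, Prod.fst_zero, Prod.snd_zero, sub_zero] at hcard hlower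
  have hnonneg : 0 ≤ x1 ∧ 0 ≤ x2 := by omega
  have hupper : #γ ≤ 2 * #(uIcc (0 : ℤ × ℤ).1 x1) + 2 * #(uIcc (0 : ℤ × ℤ).2 x2) := by
    simp only [Int.card_uIcc, Prod.fst_zero, Prod.snd_zero, sub_zero]
    omega
  have hbox (p : ℤ × ℤ) (hp : p ∈ C.supp) : p.1 ∈ Icc 0 x1 ∧ p.2 ∈ Icc 0 x2 := by
    simpa [uIcc_of_le, hnonneg] using complGraph.mem_uIcc_of_card_le hC h0 hx hupper hp
  have hbd := complGraph.edgeBoundary_supp_subset C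
  refine ⟨hbd (Or.inr ⟨h0, ?_⟩), hbd (Or.inr ⟨h0, ?_⟩), hbd (Or.inl ⟨hx, ?_⟩),
    hbd (Or.inl ⟨hx, ?_⟩)⟩ <;>
    exact fun h => by simpa [fst, snd, mem_Icc] using hbox _ h

/-- For `x = (x₁,x₂)` with `x₁, x₂ > 0`, every minimal contour
surrounding `{0,x}` contains the four edges `⟨(-1,0),(0,0)⟩`, `⟨(0,-1),(0,0)⟩`,
`⟨(x₁,x₂),(x₁,x₂+1)⟩` and `⟨(x₁,x₂),(x₁+1,x₂)⟩`. -/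
theorem minimal_contour_contains_corner_edges (x1 x2 : ℤ) (h1 : 0 < x1) (h2 : 0 < x2)
    (γ : Finset LatticeEdge) (hγ : γ ∈ GammaN {0, (x1, x2)} (normC (x1, x2))) :
    (⟨(-1, 0), true⟩ : LatticeEdge) ∈ γ ∧ (⟨(0, -1), false⟩ : LatticeEdge) ∈ γ ∧
    (⟨(x1, x2), false⟩ : LatticeEdge) ∈ γ ∧ (⟨(x1, x2), true⟩ : LatticeEdge) ∈ γ :=
  minimal_contour_contains_corner_edges_general x1 x2 γ hγ
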